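/- Let all preferences in P be substitutable and satisfy the law of aggregate demand, and let μ and μ' be stable matchings with μ ≻_F μ'. Then there exists a cyclic matching μ_σ under the reduced preference profile P^μ (the reduced profile with respect to μ and the worker-optimal stable matching μ_W) such that μ ⪰_F μ_σ ⪰_F μ'. -/
import Mathlib


open Finset

noncomputable section

open scoped Classical

/-- `C` is a choice function: `C S ⊆ S` for every `S`. -/
def IsChoiceFun {α : Type*} (C : Finset α → Finset α) : Prop := ∀ S, C S ⊆ S

/-- Substitutability of a choice function: if `b` is chosen from `S`, then `b` is chosen
from `S' ∪ {b}` for every `S' ⊆ S`. -/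
def Substitutable {α : Type*} [DecidableEq α] (C : Finset α → Finset α) : Prop :=
  ∀ (S S' : Finset α) (b : α), S' ⊆ S → b ∈ C S → b ∈ C (insert b S')

/-- The law of aggregate demand for a choice function. -/
def LAD {α : Type*} (C : Finset α → Finset α) : Prop :=
  ∀ S' S : Finset α, S' ⊆ S → (C S').card ≤ (C S).card

/-- The most `u`-preferred subset of `S` among the members of the family `A` of acceptable
sets (the empty set is always available as a fallback). -/
def bestIn {α : Type*} (u : Finset α → ℕ) (A : Set (Finset α)) (S : Finset α) : Finset α := by
  classical
  have h : ∃ T ∈ (S.powerset).filter (fun T => T ∈ A ∨ T = ∅),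
      ∀ T' ∈ (S.powerset).filter (fun T => T ∈ A ∨ T = ∅), u T' ≤ u T :=
    Finset.exists_max_image _ u ⟨∅, by simp⟩
  exact h.choose

/-- A many-to-many matching market: each firm `f` has a strict preference over subsets
of workers, represented by an injective utility `uF f`, and symmetrically for workers. -/
structure Market (F W : Type*) where
  uF : F → Finset W → ℕ
  uW : W → Finset F → ℕ
  injF : ∀ f, Function.Injective (uF f)
  injW : ∀ w, Function.Injective (uW w)

/-- A many-to-many matching. -/
structure Matching (F W : Type*) where
  fm : F → Finset W
  wm : W → Finset F
  consistent : ∀ f w, w ∈ fm f ↔ f ∈ wm w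

namespace Market

variable {F W : Type*} [DecidableEq F] [DecidableEq W]

/-- The choice set of firm `f` under the original preference: the most preferred
subset among the acceptable subsets (those strictly preferred to `∅`). -/
def Cf (M : Market F W) (f : F) : Finset W → Finset W :=
  bestIn (M.uF f) {T | M.uF f ∅ < M.uF f T}

/-- The choice set of worker `w` under the original preference. -/
def Cw (M : Market F W) (w : W) : Finset F → Finset F :=
  bestIn (M.uW w) {T | M.uW w ∅ < M.uW w T}

/-- Individual rationality under the original profile. -/
def IR (M : Market F W) (μ : Matching F W) : Prop :=
  (∀ f, M.Cf f (μ.fm f) = μ.fm f) ∧ (∀ w, M.Cw w (μ.wm w) = μ.wm w)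

/-- `(f,w)` blocks `μ` under the original profile. -/
def Blocks (M : Market F W) (μ : Matching F W) (f : F) (w : W) : Prop :=
  w ∉ μ.fm f ∧ w ∈ M.Cf f (insert w (μ.fm f)) ∧ f ∈ M.Cw w (insert f (μ.wm w))

/-- Stability under the original profile. -/
def Stable (M : Market F W) (μ : Matching F W) : Prop :=
  M.IR μ ∧ ∀ f w, ¬ M.Blocks μ f w

/-- Blair's partial order for firm `f`: `S ⪰_f S'` iff `C_f (S ∪ S') = S`. -/
def blairF (M : Market F W) (f : F) (S S' : Finset W) : Prop := M.Cf f (S ∪ S') = S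

/-- Blair's partial order for worker `w`. -/
def blairW (M : Market F W) (w : W) (S S' : Finset F) : Prop := M.Cw w (S ∪ S') = S

/-- The unanimous Blair order for the firms' side: `μ ⪰_F μ'`. -/
def geF (M : Market F W) (μ μ' : Matching F W) : Prop := ∀ f, M.blairF f (μ.fm f) (μ'.fm f)

/-- The unanimous Blair order for the workers' side: `μ ⪰_W μ'`. -/
def geW (M : Market F W) (μ μ' : Matching F W) : Prop := ∀ w, M.blairW w (μ.wm w) (μ'.wm w)

/-- Strict unanimous Blair order for the firms' side: `μ ≻_F μ'`. -/
def gtF (M : Market F W) (μ μ' : Matching F W) : Prop := M.geF μ μ' ∧ μ ≠ μ'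

/-- Workers deleted from `f`'s list in Step 1(a) of the reduction procedure:
those belonging to some `W' ≻_f μ(f)` but not to `μ(f)`. -/
def D1 (M : Market F W) (μ : Matching F W) (f : F) : Set W :=
  {x | ∃ W' : Finset W, (M.Cf f (W' ∪ μ.fm f) = W' ∧ W' ≠ μ.fm f) ∧ x ∈ W' ∧ x ∉ μ.fm f}

/-- Workers deleted from `f`'s list in Step 2(a): those belonging to some `W'` with
`μ̃(f) ≻_f W'` but not to `μ̃(f)`. -/
def D2 (M : Market F W) (μt : Matching F W) (f : F) : Set W :=
  {x | ∃ W' : Finset W, (M.Cf f (μt.fm f ∪ W') = μt.fm f ∧ μt.fm f ≠ W') ∧ x ∈ W' ∧ x ∉ μt.fm f}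

/-- Firms deleted from `w`'s list in Step 1(b). -/
def E1 (M : Market F W) (μt : Matching F W) (w : W) : Set F :=
  {x | ∃ F' : Finset F, (M.Cw w (F' ∪ μt.wm w) = F' ∧ F' ≠ μt.wm w) ∧ x ∈ F' ∧ x ∉ μt.wm w}

/-- Firms deleted from `w`'s list in Step 2(b). -/
def E2 (M : Market F W) (μ : Matching F W) (w : W) : Set F :=
  {x | ∃ F' : Finset F, (M.Cw w (μ.wm w ∪ F') = μ.wm w ∧ μ.wm w ≠ F') ∧ x ∈ F' ∧ x ∉ μ.wm w}

/-- Workers deleted from `f`'s list in Step 3: those workers `w` for which `{f}` is no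
longer on `w`'s list after Steps 1 and 2 (either `{f}` was never acceptable to `w`, or
`f` was deleted from `w`'s list in Step 1(b) or 2(b)). -/
def D3 (M : Market F W) (μ μt : Matching F W) (f : F) : Set W :=
  {w | ¬ (M.uW w ∅ < M.uW w {f}) ∨ f ∈ M.E1 μt w ∪ M.E2 μ w}

/-- Firms deleted from `w`'s list in Step 3. -/
def E3 (M : Market F W) (μ μt : Matching F W) (w : W) : Set F :=
  {f | ¬ (M.uF f ∅ < M.uF f {w}) ∨ w ∈ M.D1 μ f ∪ M.D2 μt f}

/-- All workers deleted from `f`'s list in the reduction procedure. -/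
def Dall (M : Market F W) (μ μt : Matching F W) (f : F) : Set W :=
  M.D1 μ f ∪ M.D2 μt f ∪ M.D3 μ μt f

/-- All firms deleted from `w`'s list in the reduction procedure. -/
def Eall (M : Market F W) (μ μt : Matching F W) (w : W) : Set F :=
  M.E1 μt w ∪ M.E2 μ w ∪ M.E3 μ μt w

/-- The family of sets surviving in `f`'s list under the reduced profile `P^{μ,μ̃}`:
originally acceptable sets containing no deleted worker. -/
def RAf (M : Market F W) (μ μt : Matching F W) (f : F) : Set (Finset W) :=
  {T | M.uF f ∅ < M.uF f T ∧ ∀ x ∈ T, x ∉ M.Dall μ μt f}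

/-- The family of sets surviving in `w`'s list under the reduced profile `P^{μ,μ̃}`. -/
def RAw (M : Market F W) (μ μt : Matching F W) (w : W) : Set (Finset F) :=
  {T | M.uW w ∅ < M.uW w T ∧ ∀ x ∈ T, x ∉ M.Eall μ μt w}

/-- The choice set `C^{μ,μ̃}_f` of firm `f` under the reduced profile. -/
def Cfred (M : Market F W) (μ μt : Matching F W) (f : F) : Finset W → Finset W :=
  bestIn (M.uF f) (M.RAf μ μt f)

/-- The choice set `C^{μ,μ̃}_w` of worker `w` under the reduced profile. -/
def Cwred (M : Market F W) (μ μt : Matching F W) (w : W) : Finset F → Finset F :=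
  bestIn (M.uW w) (M.RAw μ μt w)

/-- Individual rationality under the reduced profile `P^{μ,μ̃}`. -/
def IRred (M : Market F W) (μ μt ν : Matching F W) : Prop :=
  (∀ f, M.Cfred μ μt f (ν.fm f) = ν.fm f) ∧ (∀ w, M.Cwred μ μt w (ν.wm w) = ν.wm w)

/-- Blocking under the reduced profile `P^{μ,μ̃}`. -/
def Blocksred (M : Market F W) (μ μt ν : Matching F W) (f : F) (w : W) : Prop :=
  w ∉ ν.fm f ∧ w ∈ M.Cfred μ μt f (insert w (ν.fm f)) ∧
    f ∈ M.Cwred μ μt w (insert f (ν.wm w))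

/-- Stability under the reduced profile `P^{μ,μ̃}`. -/
def Stablered (M : Market F W) (μ μt ν : Matching F W) : Prop :=
  M.IRred μ μt ν ∧ ∀ f w, ¬ M.Blocksred μ μt ν f w

/-- The unanimous Blair order on the firms' side computed with the reduced choice sets. -/
def geFred (M : Market F W) (μ μt ν ν' : Matching F W) : Prop :=
  ∀ f, M.Cfred μ μt f (ν.fm f ∪ ν'.fm f) = ν.fm f

/-- The unanimous Blair order on the workers' side computed with the reduced choice sets. -/
def geWred (M : Market F W) (μ μt ν ν' : Matching F W) : Prop :=
  ∀ w, M.Cwred μ μt w (ν.wm w ∪ ν'.wm w) = ν.wm w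

/-- All preferences in the market are substitutable. -/
def SubstAll (M : Market F W) : Prop :=
  (∀ f, Substitutable (M.Cf f)) ∧ (∀ w, Substitutable (M.Cw w))

/-- All preferences in the market satisfy the law of aggregate demand. -/
def LADAll (M : Market F W) : Prop :=
  (∀ f, LAD (M.Cf f)) ∧ (∀ w, LAD (M.Cw w))

/-- A cycle for the reduced profile `P^{μ,μ̃}`: an `r`-periodic sequence of worker-firm
pairs `(w_i, f_i)` (indexed cyclically) such that (i) `w_i ∈ μ(f_i) \ μ̃(f_i)`;
(ii) `C^{μ,μ̃}_{f_i}(W \ {w_i}) = (μ(f_i) \ {w_i}) ∪ {w_{i+1}}`; and (iii)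
`C^{μ,μ̃}_{w_{i+1}}(μ(w_{i+1}) ∪ {f_i}) = (μ(w_{i+1}) \ {f_{i+1}}) ∪ {f_i}`. -/
def IsCycle [Fintype W] (M : Market F W) (μ μt : Matching F W) (r : ℕ)
    (w : ℕ → W) (f : ℕ → F) : Prop :=
  0 < r ∧ (∀ i, w (i + r) = w i) ∧ (∀ i, f (i + r) = f i) ∧
  ∀ i, (w i ∈ μ.fm (f i) ∧ w i ∉ μt.fm (f i)) ∧
    M.Cfred μ μt (f i) (Finset.univ \ {w i}) = insert (w (i + 1)) (μ.fm (f i) \ {w i}) ∧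
    M.Cwred μ μt (w (i + 1)) (μ.wm (w (i + 1)) ∪ {f i}) =
      insert (f i) (μ.wm (w (i + 1)) \ {f (i + 1)})

/-- The firm-side assignment of the cyclic matching `μ_σ` obtained from the cycle
`σ = (w, f)` of length `r`. -/
def cyclicFm (μ : Matching F W) (r : ℕ) (w : ℕ → W) (f : ℕ → F) (g : F) : Finset W :=
  if ∃ i ∈ Finset.range r, f i = g then
    (μ.fm g \ ((Finset.range r).filter (fun i => f i = g)).image w) ∪
      ((Finset.range r).filter (fun i => f i = g)).image (fun i => w (i + 1))
  else μ.fm g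

/-- `ν` is a cyclic matching under the reduced profile `P^{μ,μ̃}`: `ν = μ_σ` for some
cycle `σ` for `P^{μ,μ̃}` (the worker side of `ν` is determined by consistency). -/
def IsCyclicMatching [Fintype W] (M : Market F W) (μ μt ν : Matching F W) : Prop :=
  ∃ (r : ℕ) (w : ℕ → W) (f : ℕ → F),
    M.IsCycle μ μt r w f ∧ ∀ g, ν.fm g = cyclicFm μ r w f g

end Market

set_option linter.unusedVariables false
set_option linter.unusedSectionVars false
theorem bestIn_spec {α : Type*} (u : Finset α → ℕ) (A : Set (Finset α)) (S : Finset α) :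
    (bestIn u A S ⊆ S ∧ (bestIn u A S ∈ A ∨ bestIn u A S = ∅)) ∧
    ∀ T, T ⊆ S → (T ∈ A ∨ T = ∅) → u T ≤ u (bestIn u A S) := by
  have h : ∃ T ∈ (S.powerset).filter (fun T => T ∈ A ∨ T = ∅),
      ∀ T' ∈ (S.powerset).filter (fun T => T ∈ A ∨ T = ∅), u T' ≤ u T :=
    Finset.exists_max_image _ u ⟨∅, by simp⟩
  have hb : bestIn u A S = h.choose := rfl
  obtain ⟨h1, h2⟩ := h.choose_spec
  rw [Finset.mem_filter, Finset.mem_powerset] at h1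
  refine ⟨⟨by rw [hb]; exact h1.1, by rw [hb]; exact h1.2⟩, fun T hT hA => ?_⟩
  rw [hb]
  exact h2 T (Finset.mem_filter.2 ⟨Finset.mem_powerset.2 hT, hA⟩)

theorem bestIn_subset {α : Type*} (u : Finset α → ℕ) (A : Set (Finset α)) (S : Finset α) :
    bestIn u A S ⊆ S := (bestIn_spec u A S).1.1

theorem bestIn_mem {α : Type*} (u : Finset α → ℕ) (A : Set (Finset α)) (S : Finset α) :
    bestIn u A S ∈ A ∨ bestIn u A S = ∅ := (bestIn_spec u A S).1.2

theorem bestIn_le {α : Type*} (u : Finset α → ℕ) (A : Set (Finset α)) (S : Finset α)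
    {T : Finset α} (hT : T ⊆ S) (hA : T ∈ A ∨ T = ∅) : u T ≤ u (bestIn u A S) :=
  (bestIn_spec u A S).2 T hT hA

theorem bestIn_eq {α : Type*} {u : Finset α → ℕ} (hinj : Function.Injective u)
    (A : Set (Finset α)) {S T : Finset α} (hT : T ⊆ S) (hA : T ∈ A ∨ T = ∅)
    (hmax : ∀ T', T' ⊆ S → (T' ∈ A ∨ T' = ∅) → u T' ≤ u T) : bestIn u A S = T :=
  hinj (le_antisymm
    (hmax _ (bestIn_subset u A S) (bestIn_mem u A S)) (bestIn_le u A S hT hA))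

theorem bestIn_eq_of_subset {α : Type*} {u : Finset α → ℕ} (hinj : Function.Injective u)
    (A : Set (Finset α)) {S₁ S₂ : Finset α} (h1 : bestIn u A S₂ ⊆ S₁) (h2 : S₁ ⊆ S₂) :
    bestIn u A S₁ = bestIn u A S₂ :=
  bestIn_eq hinj A h1 (bestIn_mem u A S₂)
    (fun T' hT' hA' => bestIn_le u A S₂ (hT'.trans h2) hA')

theorem bestIn_squeeze {α : Type*} [DecidableEq α] {u : Finset α → ℕ}
    (hinj : Function.Injective u) (A : Set (Finset α)) {X Y : Finset α} {b : α}
    (hC : bestIn u A (X ∪ Y) = X) (hb : b ∈ bestIn u A (insert b X)) (hbY : b ∈ Y) :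
    b ∈ X := by
  have hsub : bestIn u A (insert b X) ⊆ X ∪ Y := by
    refine (bestIn_subset u A _).trans ?_
    intro z hz
    rcases Finset.mem_insert.1 hz with rfl | hz
    · exact Finset.mem_union_right _ hbY
    · exact Finset.mem_union_left _ hz
  have h1 : u (bestIn u A (insert b X)) ≤ u X := by
    have := bestIn_le u A (X ∪ Y) hsub (bestIn_mem u A _)
    rwa [hC] at this
  have h2 : u X ≤ u (bestIn u A (insert b X)) := by
    refine bestIn_le u A _ (Finset.subset_insert _ _) ?_
    rw [← hC]; exact bestIn_mem u A _
  have : bestIn u A (insert b X) = X := hinj (le_antisymm h1 h2)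
  rwa [this] at hb

theorem subst_mem {α : Type*} [DecidableEq α] {C : Finset α → Finset α}
    (hs : Substitutable C) {S S' : Finset α} {b : α}
    (hb : b ∈ C S) (hS' : S' ⊆ S) (hbS' : b ∈ S') : b ∈ C S' := by
  have := hs S S' b hS' hb
  rwa [Finset.insert_eq_self.mpr hbS'] at this

section wrappers
variable {F W : Type*} [DecidableEq F] [DecidableEq W] {M : Market F W}

lemma Cf_subset (f : F) (S : Finset W) : M.Cf f S ⊆ S := bestIn_subset _ _ _
lemma Cw_subset (w : W) (S : Finset F) : M.Cw w S ⊆ S := bestIn_subset _ _ _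

lemma Cf_mem (f : F) (S : Finset W) :
    (M.uF f ∅ < M.uF f (M.Cf f S)) ∨ M.Cf f S = ∅ :=
  bestIn_mem (M.uF f) {T | M.uF f ∅ < M.uF f T} S
lemma Cw_mem (w : W) (S : Finset F) :
    (M.uW w ∅ < M.uW w (M.Cw w S)) ∨ M.Cw w S = ∅ :=
  bestIn_mem (M.uW w) {T | M.uW w ∅ < M.uW w T} S

lemma Cf_le (f : F) {S T : Finset W} (hT : T ⊆ S)
    (hA : (M.uF f ∅ < M.uF f T) ∨ T = ∅) : M.uF f T ≤ M.uF f (M.Cf f S) :=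
  bestIn_le (M.uF f) {T | M.uF f ∅ < M.uF f T} S hT hA
lemma Cw_le (w : W) {S T : Finset F} (hT : T ⊆ S)
    (hA : (M.uW w ∅ < M.uW w T) ∨ T = ∅) : M.uW w T ≤ M.uW w (M.Cw w S) :=
  bestIn_le (M.uW w) {T | M.uW w ∅ < M.uW w T} S hT hA

lemma Cf_eq_of_subset (f : F) {S₁ S₂ : Finset W} (h1 : M.Cf f S₂ ⊆ S₁) (h2 : S₁ ⊆ S₂) :
    M.Cf f S₁ = M.Cf f S₂ := bestIn_eq_of_subset (M.injF f) _ h1 h2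
lemma Cw_eq_of_subset (w : W) {S₁ S₂ : Finset F} (h1 : M.Cw w S₂ ⊆ S₁) (h2 : S₁ ⊆ S₂) :
    M.Cw w S₁ = M.Cw w S₂ := bestIn_eq_of_subset (M.injW w) _ h1 h2

lemma Cf_squeeze {f : F} {X Y : Finset W} {b : W} (hC : M.Cf f (X ∪ Y) = X)
    (hb : b ∈ M.Cf f (insert b X)) (hbY : b ∈ Y) : b ∈ X :=
  bestIn_squeeze (M.injF f) _ hC hb hbY
lemma Cw_squeeze {w : W} {X Y : Finset F} {b : F} (hC : M.Cw w (X ∪ Y) = X)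
    (hb : b ∈ M.Cw w (insert b X)) (hbY : b ∈ Y) : b ∈ X :=
  bestIn_squeeze (M.injW w) _ hC hb hbY

lemma Cf_acc_of_mem {f : F} {S : Finset W} {w : W} (hsf : Substitutable (M.Cf f))
    (hw : w ∈ M.Cf f S) : M.uF f ∅ < M.uF f {w} := by
  have h1 : w ∈ M.Cf f {w} :=
    subst_mem hsf hw (Finset.singleton_subset_iff.2 (Cf_subset f S hw)) (Finset.mem_singleton_self w)
  have h2 : M.Cf f {w} = {w} :=
    subset_antisymm (Cf_subset f _) (Finset.singleton_subset_iff.2 h1)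
  rcases Cf_mem f {w} with hacc | hemp
  · rwa [h2] at hacc
  · rw [h2] at hemp; simp at hemp

lemma Cw_acc_of_mem {w : W} {S : Finset F} {f : F} (hsw : Substitutable (M.Cw w))
    (hf : f ∈ M.Cw w S) : M.uW w ∅ < M.uW w {f} := by
  have h1 : f ∈ M.Cw w {f} :=
    subst_mem hsw hf (Finset.singleton_subset_iff.2 (Cw_subset w S hf)) (Finset.mem_singleton_self f)
  have h2 : M.Cw w {f} = {f} :=
    subset_antisymm (Cw_subset w _) (Finset.singleton_subset_iff.2 h1)
  rcases Cw_mem w {f} with hacc | hemp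
  · rwa [h2] at hacc
  · rw [h2] at hemp; simp at hemp

lemma acc_or_empty_f {f : F} {S : Finset W} (h : M.Cf f S = S) :
    (M.uF f ∅ < M.uF f S) ∨ S = ∅ := by
  rcases Cf_mem (M := M) f S with hacc | hemp
  · left; rwa [h] at hacc
  · right; rwa [h] at hemp

lemma acc_or_empty_w {w : W} {S : Finset F} (h : M.Cw w S = S) :
    (M.uW w ∅ < M.uW w S) ∨ S = ∅ := by
  rcases Cw_mem (M := M) w S with hacc | hemp
  · left; rwa [h] at hacc
  · right; rwa [h] at hemp

end wrappers

section redfilter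
variable {F W : Type*} [DecidableEq F] [DecidableEq W] {M : Market F W}

lemma Cfred_filter (μ μt : Matching F W) (f : F) (S : Finset W) :
    M.Cfred μ μt f S = M.Cf f (S.filter (fun x => x ∉ M.Dall μ μt f)) := by
  refine bestIn_eq (M.injF f) (M.RAf μ μt f) ?_ ?_ ?_
  · exact (Cf_subset f _).trans (Finset.filter_subset _ _)
  · rcases Cf_mem (M := M) f (S.filter (fun x => x ∉ M.Dall μ μt f)) with hacc | hemp
    · left
      refine ⟨hacc, fun x hx => ?_⟩
      exact (Finset.mem_filter.1 (Cf_subset f _ hx)).2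
    · right; exact hemp
  · rintro T' hT' (⟨hacc, hav⟩ | rfl)
    · refine Cf_le f ?_ (Or.inl hacc)
      intro x hx
      exact Finset.mem_filter.2 ⟨hT' hx, hav x hx⟩
    · exact Cf_le f (Finset.empty_subset _) (Or.inr rfl)

lemma Cwred_filter (μ μt : Matching F W) (w : W) (S : Finset F) :
    M.Cwred μ μt w S = M.Cw w (S.filter (fun x => x ∉ M.Eall μ μt w)) := by
  refine bestIn_eq (M.injW w) (M.RAw μ μt w) ?_ ?_ ?_
  · exact (Cw_subset w _).trans (Finset.filter_subset _ _)
  · rcases Cw_mem (M := M) w (S.filter (fun x => x ∉ M.Eall μ μt w)) with hacc | hemp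
    · left
      refine ⟨hacc, fun x hx => ?_⟩
      exact (Finset.mem_filter.1 (Cw_subset w _ hx)).2
    · right; exact hemp
  · rintro T' hT' (⟨hacc, hav⟩ | rfl)
    · refine Cw_le w ?_ (Or.inl hacc)
      intro x hx
      exact Finset.mem_filter.2 ⟨hT' hx, hav x hx⟩
    · exact Cw_le w (Finset.empty_subset _) (Or.inr rfl)

lemma Cfred_of_avoid (μ μt : Matching F W) (f : F) {S : Finset W}
    (h : ∀ x ∈ S, x ∉ M.Dall μ μt f) : M.Cfred μ μt f S = M.Cf f S := by
  rw [Cfred_filter, Finset.filter_true_of_mem h]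

lemma Cwred_of_avoid (μ μt : Matching F W) (w : W) {S : Finset F}
    (h : ∀ x ∈ S, x ∉ M.Eall μ μt w) : M.Cwred μ μt w S = M.Cw w S := by
  rw [Cwred_filter, Finset.filter_true_of_mem h]

end redfilter

section opposition
variable {F W : Type*} [DecidableEq F] [DecidableEq W] {M : Market F W}

lemma oppFW {ρ ν : Matching F W} (hsub : M.SubstAll) (hρ : M.Stable ρ)
    (h : ∀ f₀, M.Cf f₀ (ν.fm f₀ ∪ ρ.fm f₀) = ν.fm f₀) :
    ∀ x, M.Cw x (ρ.wm x ∪ ν.wm x) = ρ.wm x := by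
  intro x
  have hAsub : M.Cw x (ρ.wm x ∪ ν.wm x) ⊆ ρ.wm x := by
    intro g hg
    by_contra hng
    have hgν : g ∈ ν.wm x := by
      rcases Finset.mem_union.1 (Cw_subset x _ hg) with h1 | h1
      · exact absurd h1 hng
      · exact h1
    have hxν : x ∈ ν.fm g := (ν.consistent g x).2 hgν
    have hfside : x ∈ M.Cf g (insert x (ρ.fm g)) := by
      refine hsub.1 g (ν.fm g ∪ ρ.fm g) (ρ.fm g) x Finset.subset_union_right ?_
      rw [h g]; exact hxν
    have hwside : g ∈ M.Cw x (insert g (ρ.wm x)) :=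
      hsub.2 x (ρ.wm x ∪ ν.wm x) (ρ.wm x) g Finset.subset_union_left hg
    have hxρ : x ∉ ρ.fm g := fun hc => hng ((ρ.consistent g x).1 hc)
    exact hρ.2 g x ⟨hxρ, hfside, hwside⟩
  have := Cw_eq_of_subset x hAsub Finset.subset_union_left
  rw [hρ.1.2 x] at this
  rw [← this]

lemma oppWF {ρ ν : Matching F W} (hsub : M.SubstAll) (hρ : M.Stable ρ)
    (h : ∀ x, M.Cw x (ν.wm x ∪ ρ.wm x) = ν.wm x) :
    ∀ g, M.Cf g (ρ.fm g ∪ ν.fm g) = ρ.fm g := by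
  intro g
  have hAsub : M.Cf g (ρ.fm g ∪ ν.fm g) ⊆ ρ.fm g := by
    intro x hx
    by_contra hnx
    have hxν : x ∈ ν.fm g := by
      rcases Finset.mem_union.1 (Cf_subset g _ hx) with h1 | h1
      · exact absurd h1 hnx
      · exact h1
    have hgν : g ∈ ν.wm x := (ν.consistent g x).1 hxν
    have hwside : g ∈ M.Cw x (insert g (ρ.wm x)) := by
      refine hsub.2 x (ν.wm x ∪ ρ.wm x) (ρ.wm x) g Finset.subset_union_right ?_
      rw [h x]; exact hgν
    have hfside : x ∈ M.Cf g (insert x (ρ.fm g)) :=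
      hsub.1 g (ρ.fm g ∪ ν.fm g) (ρ.fm g) x Finset.subset_union_left hx
    exact hρ.2 g x ⟨hnx, hfside, hwside⟩
  have := Cf_eq_of_subset g hAsub Finset.subset_union_left
  rw [hρ.1.1 g] at this
  rw [← this]

end opposition

section cards
variable {F W : Type*} [DecidableEq F] [DecidableEq W] [Fintype W] {M : Market F W}

lemma sum_cards (ρ : Matching F W) (G : Finset F) (hG : ∀ x : W, ρ.wm x ⊆ G) :
    ∑ g ∈ G, (ρ.fm g).card = ∑ x : W, (ρ.wm x).card := by
  have hfg : ∀ g : F, Finset.univ.filter (fun x : W => g ∈ ρ.wm x) = ρ.fm g := by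
    intro g; ext x
    simp [ρ.consistent g x]
  have hwg : ∀ x : W, G.filter (fun g => g ∈ ρ.wm x) = ρ.wm x := by
    intro x; ext g
    simp only [Finset.mem_filter, and_iff_right_iff_imp]
    exact fun h => hG x h
  calc ∑ g ∈ G, (ρ.fm g).card
      = ∑ g ∈ G, ∑ x : W, if g ∈ ρ.wm x then 1 else 0 := by
        refine Finset.sum_congr rfl fun g _ => ?_
        rw [Finset.sum_boole, hfg g, Nat.cast_id]
    _ = ∑ x : W, ∑ g ∈ G, if g ∈ ρ.wm x then 1 else 0 := Finset.sum_comm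
    _ = ∑ x : W, (ρ.wm x).card := by
        refine Finset.sum_congr rfl fun x _ => ?_
        rw [Finset.sum_boole, hwg x, Nat.cast_id]

lemma cards_all {μW ρ : Matching F W} (hlad : M.LADAll)
    (hμWIR : M.IR μW) (hρIR : M.IR ρ)
    (hF : ∀ g, M.Cf g (ρ.fm g ∪ μW.fm g) = ρ.fm g)
    (hW : ∀ x, M.Cw x (μW.wm x ∪ ρ.wm x) = μW.wm x) :
    (∀ g, (μW.fm g).card = (ρ.fm g).card) ∧ (∀ x, (ρ.wm x).card = (μW.wm x).card) := by
  classical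
  have ineqF : ∀ g, (μW.fm g).card ≤ (ρ.fm g).card := by
    intro g
    have := hlad.1 g (μW.fm g) (ρ.fm g ∪ μW.fm g) Finset.subset_union_right
    rwa [hμWIR.1 g, hF g] at this
  have ineqW : ∀ x, (ρ.wm x).card ≤ (μW.wm x).card := by
    intro x
    have := hlad.2 x (ρ.wm x) (μW.wm x ∪ ρ.wm x) Finset.subset_union_right
    rwa [hρIR.2 x, hW x] at this
  set G : Finset F := Finset.univ.biUnion (fun x : W => μW.wm x ∪ ρ.wm x) with hGdef
  have hG1 : ∀ x : W, ρ.wm x ⊆ G := fun x =>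
    (Finset.subset_union_right).trans
      (Finset.subset_biUnion_of_mem (fun x : W => μW.wm x ∪ ρ.wm x) (Finset.mem_univ x))
  have hG2 : ∀ x : W, μW.wm x ⊆ G := fun x =>
    (Finset.subset_union_left).trans
      (Finset.subset_biUnion_of_mem (fun x : W => μW.wm x ∪ ρ.wm x) (Finset.mem_univ x))
  have hsum1 : ∑ g ∈ G, (ρ.fm g).card = ∑ x : W, (ρ.wm x).card := sum_cards ρ G hG1
  have hsum2 : ∑ g ∈ G, (μW.fm g).card = ∑ x : W, (μW.wm x).card := sum_cards μW G hG2
  have hle1 : ∑ g ∈ G, (μW.fm g).card ≤ ∑ g ∈ G, (ρ.fm g).card :=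
    Finset.sum_le_sum (fun g _ => ineqF g)
  have hle2 : ∑ x : W, (ρ.wm x).card ≤ ∑ x : W, (μW.wm x).card :=
    Finset.sum_le_sum (fun x _ => ineqW x)
  have heq : ∑ g ∈ G, (μW.fm g).card = ∑ g ∈ G, (ρ.fm g).card := by
    refine le_antisymm hle1 ?_
    rw [hsum1, hsum2]; exact hle2
  have heqW : ∑ x : W, (ρ.wm x).card = ∑ x : W, (μW.wm x).card := by
    rw [← hsum1, ← hsum2, heq]
  constructor
  · intro g
    by_cases hgG : g ∈ G
    · exact (Finset.sum_eq_sum_iff_of_le (fun i _ => ineqF i)).1 heq g hgG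
    · have h1 : μW.fm g = ∅ := by
        rw [Finset.eq_empty_iff_forall_notMem]
        intro x hx
        exact hgG (hG2 x ((μW.consistent g x).1 hx))
      have h2 : ρ.fm g = ∅ := by
        rw [Finset.eq_empty_iff_forall_notMem]
        intro x hx
        exact hgG (hG1 x ((ρ.consistent g x).1 hx))
      rw [h1, h2]
  · intro x
    exact (Finset.sum_eq_sum_iff_of_le (fun i _ => ineqW i)).1 heqW x (Finset.mem_univ x)

end cards

lemma Matching.ext' {F W : Type*} (μ ν : Matching F W) (h : ∀ g, μ.fm g = ν.fm g)
    (h2 : ∀ x, μ.wm x = ν.wm x) : μ = ν := by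
  cases μ
  cases ν
  simp only [Matching.mk.injEq]
  exact ⟨funext h, funext h2⟩

/-- Proposition 3. With substitutable preferences satisfying the law of
aggregate demand and stable matchings `μ ≻_F μ'`, there is a cyclic matching `μ_σ` under
the reduced profile `P^μ = P^{μ,μ_W}` such that `μ ⪰_F μ_σ ⪰_F μ'`. -/
theorem cyclic_matching_between {F W : Type*} [DecidableEq F] [DecidableEq W] [Fintype W]
    (M : Market F W) (hsub : M.SubstAll) (hlad : M.LADAll)
    (μW : Matching F W) (hμW : M.Stable μW) (hWopt : ∀ ν, M.Stable ν → M.geW μW ν)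
    (μ μ' : Matching F W) (hμ : M.Stable μ) (hμ' : M.Stable μ') (hgt : M.gtF μ μ') :
    ∃ ν : Matching F W, M.IsCyclicMatching μ μW ν ∧ M.geF μ ν ∧ M.geF ν μ' := by
  classical
  obtain ⟨hgeF, hnemm⟩ := hgt
  have hIRμf : ∀ g, M.Cf g (μ.fm g) = μ.fm g := hμ.1.1
  have hIRμw : ∀ x, M.Cw x (μ.wm x) = μ.wm x := hμ.1.2
  have hIRμ'f : ∀ g, M.Cf g (μ'.fm g) = μ'.fm g := hμ'.1.1
  have hIRμ'w : ∀ x, M.Cw x (μ'.wm x) = μ'.wm x := hμ'.1.2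
  have hIRμWf : ∀ g, M.Cf g (μW.fm g) = μW.fm g := hμW.1.1
  have hIRμWw : ∀ x, M.Cw x (μW.wm x) = μW.wm x := hμW.1.2
  have hgeFμμ' : ∀ g, M.Cf g (μ.fm g ∪ μ'.fm g) = μ.fm g := hgeF
  have hgeWμWμ : ∀ x, M.Cw x (μW.wm x ∪ μ.wm x) = μW.wm x := hWopt μ hμ
  have hgeWμWμ' : ∀ x, M.Cw x (μW.wm x ∪ μ'.wm x) = μW.wm x := hWopt μ' hμ'
  have hgeFμμW : ∀ g, M.Cf g (μ.fm g ∪ μW.fm g) = μ.fm g := oppWF hsub hμ hgeWμWμ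
  have hgeFμ'μW : ∀ g, M.Cf g (μ'.fm g ∪ μW.fm g) = μ'.fm g := oppWF hsub hμ' hgeWμWμ'
  have hgeWμ'μ : ∀ x, M.Cw x (μ'.wm x ∪ μ.wm x) = μ'.wm x := oppFW hsub hμ' hgeFμμ'
  have hcards1 := cards_all hlad hμW.1 hμ.1 hgeFμμW hgeWμWμ
  have cardFμ : ∀ g, (μW.fm g).card = (μ.fm g).card := hcards1.1
  have cardWμ : ∀ x, (μ.wm x).card = (μW.wm x).card := hcards1.2
  have hcards2 := cards_all hlad hμW.1 hμ'.1 hgeFμ'μW hgeWμWμ'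
  have cardFμ' : ∀ g, (μW.fm g).card = (μ'.fm g).card := hcards2.1
  -- deletion-avoidance lemmas
  have Davμ : ∀ {g : F} {x : W}, x ∈ μ.fm g → x ∉ M.Dall μ μW g := by
    intro g x hx hD
    rcases hD with (h1 | h2) | h3
    · obtain ⟨W', ⟨hC, hne⟩, hxW', hxn⟩ := h1
      exact hxn hx
    · obtain ⟨W', ⟨hC, hne⟩, hxW', hxn⟩ := h2
      have hx1 : x ∈ M.Cf g (insert x (μW.fm g)) :=
        hsub.1 g (μ.fm g ∪ μW.fm g) (μW.fm g) x Finset.subset_union_right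
          (by rw [hgeFμμW g]; exact hx)
      exact hxn (Cf_squeeze hC hx1 hxW')
    · rcases h3 with hnacc | (hE1 | hE2)
      · exact hnacc (Cw_acc_of_mem (hsub.2 x)
          (show g ∈ M.Cw x (μ.wm x) from by rw [hIRμw x]; exact (μ.consistent g x).1 hx))
      · obtain ⟨F', ⟨hC, hne⟩, hgF', hgn⟩ := hE1
        have hw1 : g ∈ M.Cw x (insert g (μW.wm x)) :=
          hsub.2 x (F' ∪ μW.wm x) (μW.wm x) g Finset.subset_union_right
            (by rw [hC]; exact hgF')
        have hf1 : x ∈ M.Cf g (insert x (μW.fm g)) :=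
          hsub.1 g (μ.fm g ∪ μW.fm g) (μW.fm g) x Finset.subset_union_right
            (by rw [hgeFμμW g]; exact hx)
        have hxnW : x ∉ μW.fm g := fun hc => hgn ((μW.consistent g x).1 hc)
        exact hμW.2 g x ⟨hxnW, hf1, hw1⟩
      · obtain ⟨F', ⟨hC, hne⟩, hgF', hgn⟩ := hE2
        exact hgn ((μ.consistent g x).1 hx)
  have DavμW : ∀ {g : F} {x : W}, x ∈ μW.fm g → x ∉ M.Dall μ μW g := by
    intro g x hx hD
    rcases hD with (h1 | h2) | h3
    · obtain ⟨W', ⟨hC, hne⟩, hxW', hxn⟩ := h1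
      have hf1 : x ∈ M.Cf g (insert x (μ.fm g)) :=
        hsub.1 g (W' ∪ μ.fm g) (μ.fm g) x Finset.subset_union_right
          (by rw [hC]; exact hxW')
      have hw1 : g ∈ M.Cw x (insert g (μ.wm x)) :=
        hsub.2 x (μW.wm x ∪ μ.wm x) (μ.wm x) g Finset.subset_union_right
          (by rw [hgeWμWμ x]; exact (μW.consistent g x).1 hx)
      exact hμ.2 g x ⟨hxn, hf1, hw1⟩
    · obtain ⟨W', ⟨hC, hne⟩, hxW', hxn⟩ := h2
      exact hxn hx
    · rcases h3 with hnacc | (hE1 | hE2)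
      · exact hnacc (Cw_acc_of_mem (hsub.2 x)
          (show g ∈ M.Cw x (μW.wm x) from by rw [hIRμWw x]; exact (μW.consistent g x).1 hx))
      · obtain ⟨F', ⟨hC, hne⟩, hgF', hgn⟩ := hE1
        exact hgn ((μW.consistent g x).1 hx)
      · obtain ⟨F', ⟨hC, hne⟩, hgF', hgn⟩ := hE2
        have hg1 : g ∈ M.Cw x (insert g (μ.wm x)) :=
          hsub.2 x (μW.wm x ∪ μ.wm x) (μ.wm x) g Finset.subset_union_right
            (by rw [hgeWμWμ x]; exact (μW.consistent g x).1 hx)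
        exact hgn (Cw_squeeze hC hg1 hgF')
  have Davμ' : ∀ {g : F} {x : W}, x ∈ μ'.fm g → x ∉ M.Dall μ μW g := by
    intro g x hx hD
    rcases hD with (h1 | h2) | h3
    · obtain ⟨W', ⟨hC, hne⟩, hxW', hxn⟩ := h1
      have hf1 : x ∈ M.Cf g (insert x (μ.fm g)) :=
        hsub.1 g (W' ∪ μ.fm g) (μ.fm g) x Finset.subset_union_right
          (by rw [hC]; exact hxW')
      have hw1 : g ∈ M.Cw x (insert g (μ.wm x)) :=
        hsub.2 x (μ'.wm x ∪ μ.wm x) (μ.wm x) g Finset.subset_union_right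
          (by rw [hgeWμ'μ x]; exact (μ'.consistent g x).1 hx)
      exact hμ.2 g x ⟨hxn, hf1, hw1⟩
    · obtain ⟨W', ⟨hC, hne⟩, hxW', hxn⟩ := h2
      have hx1 : x ∈ M.Cf g (insert x (μW.fm g)) :=
        hsub.1 g (μ'.fm g ∪ μW.fm g) (μW.fm g) x Finset.subset_union_right
          (by rw [hgeFμ'μW g]; exact hx)
      exact hxn (Cf_squeeze hC hx1 hxW')
    · rcases h3 with hnacc | (hE1 | hE2)
      · exact hnacc (Cw_acc_of_mem (hsub.2 x)
          (show g ∈ M.Cw x (μ'.wm x) from by rw [hIRμ'w x]; exact (μ'.consistent g x).1 hx))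
      · obtain ⟨F', ⟨hC, hne⟩, hgF', hgn⟩ := hE1
        have hw1 : g ∈ M.Cw x (insert g (μW.wm x)) :=
          hsub.2 x (F' ∪ μW.wm x) (μW.wm x) g Finset.subset_union_right
            (by rw [hC]; exact hgF')
        have hf1 : x ∈ M.Cf g (insert x (μW.fm g)) :=
          hsub.1 g (μ'.fm g ∪ μW.fm g) (μW.fm g) x Finset.subset_union_right
            (by rw [hgeFμ'μW g]; exact hx)
        have hxnW : x ∉ μW.fm g := fun hc => hgn ((μW.consistent g x).1 hc)
        exact hμW.2 g x ⟨hxnW, hf1, hw1⟩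
      · obtain ⟨F', ⟨hC, hne⟩, hgF', hgn⟩ := hE2
        have hg1 : g ∈ M.Cw x (insert g (μ.wm x)) :=
          hsub.2 x (μ'.wm x ∪ μ.wm x) (μ.wm x) g Finset.subset_union_right
            (by rw [hgeWμ'μ x]; exact (μ'.consistent g x).1 hx)
        exact hgn (Cw_squeeze hC hg1 hgF')
  have Eavμ : ∀ {x : W} {g : F}, g ∈ μ.wm x → g ∉ M.Eall μ μW x := by
    intro x g hg hE
    rcases hE with (h1 | h2) | h3
    · obtain ⟨F', ⟨hC, hne⟩, hgF', hgn⟩ := h1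
      have hw1 : g ∈ M.Cw x (insert g (μW.wm x)) :=
        hsub.2 x (F' ∪ μW.wm x) (μW.wm x) g Finset.subset_union_right
          (by rw [hC]; exact hgF')
      have hf1 : x ∈ M.Cf g (insert x (μW.fm g)) :=
        hsub.1 g (μ.fm g ∪ μW.fm g) (μW.fm g) x Finset.subset_union_right
          (by rw [hgeFμμW g]; exact (μ.consistent g x).2 hg)
      have hxnW : x ∉ μW.fm g := fun hc => hgn ((μW.consistent g x).1 hc)
      exact hμW.2 g x ⟨hxnW, hf1, hw1⟩
    · obtain ⟨F', ⟨hC, hne⟩, hgF', hgn⟩ := h2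
      exact hgn hg
    · rcases h3 with hnacc | (hD1 | hD2)
      · exact hnacc (Cf_acc_of_mem (hsub.1 g)
          (show x ∈ M.Cf g (μ.fm g) from by rw [hIRμf g]; exact (μ.consistent g x).2 hg))
      · obtain ⟨W', ⟨hC, hne⟩, hxW', hxn⟩ := hD1
        exact hxn ((μ.consistent g x).2 hg)
      · obtain ⟨W', ⟨hC, hne⟩, hxW', hxn⟩ := hD2
        have hx1 : x ∈ M.Cf g (insert x (μW.fm g)) :=
          hsub.1 g (μ.fm g ∪ μW.fm g) (μW.fm g) x Finset.subset_union_right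
            (by rw [hgeFμμW g]; exact (μ.consistent g x).2 hg)
        exact hxn (Cf_squeeze hC hx1 hxW')
  have EavμW : ∀ {x : W} {g : F}, g ∈ μW.wm x → g ∉ M.Eall μ μW x := by
    intro x g hg hE
    rcases hE with (h1 | h2) | h3
    · obtain ⟨F', ⟨hC, hne⟩, hgF', hgn⟩ := h1
      exact hgn hg
    · obtain ⟨F', ⟨hC, hne⟩, hgF', hgn⟩ := h2
      have hg1 : g ∈ M.Cw x (insert g (μ.wm x)) :=
        hsub.2 x (μW.wm x ∪ μ.wm x) (μ.wm x) g Finset.subset_union_right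
          (by rw [hgeWμWμ x]; exact hg)
      exact hgn (Cw_squeeze hC hg1 hgF')
    · rcases h3 with hnacc | (hD1 | hD2)
      · exact hnacc (Cf_acc_of_mem (hsub.1 g)
          (show x ∈ M.Cf g (μW.fm g) from by rw [hIRμWf g]; exact (μW.consistent g x).2 hg))
      · obtain ⟨W', ⟨hC, hne⟩, hxW', hxn⟩ := hD1
        have hf1 : x ∈ M.Cf g (insert x (μ.fm g)) :=
          hsub.1 g (W' ∪ μ.fm g) (μ.fm g) x Finset.subset_union_right
            (by rw [hC]; exact hxW')
        have hw1 : g ∈ M.Cw x (insert g (μ.wm x)) :=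
          hsub.2 x (μW.wm x ∪ μ.wm x) (μ.wm x) g Finset.subset_union_right
            (by rw [hgeWμWμ x]; exact hg)
        exact hμ.2 g x ⟨hxn, hf1, hw1⟩
      · obtain ⟨W', ⟨hC, hne⟩, hxW', hxn⟩ := hD2
        exact hxn ((μW.consistent g x).2 hg)
  -- maximality of μ(f) among D-avoiding acceptable sets
  have maxD : ∀ (g : F) (T : Finset W), (M.uF g ∅ < M.uF g T) →
      (∀ x ∈ T, x ∉ M.Dall μ μW g) → M.uF g T ≤ M.uF g (μ.fm g) := by
    intro g T hacc hav
    have hT1le : M.uF g T ≤ M.uF g (M.Cf g (T ∪ μ.fm g)) :=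
      Cf_le g Finset.subset_union_left (Or.inl hacc)
    suffices h : M.Cf g (T ∪ μ.fm g) = μ.fm g by rwa [h] at hT1le
    by_contra hT₁ne
    have hC2 : M.Cf g (M.Cf g (T ∪ μ.fm g) ∪ μ.fm g) = M.Cf g (T ∪ μ.fm g) := by
      refine Cf_eq_of_subset g Finset.subset_union_left
        (Finset.union_subset (Cf_subset g _) Finset.subset_union_right)
    have hex : ∃ y ∈ M.Cf g (T ∪ μ.fm g), y ∉ μ.fm g := by
      by_contra hcon
      push_neg at hcon
      have hsb : M.Cf g (T ∪ μ.fm g) ⊆ μ.fm g := hcon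
      have := Cf_eq_of_subset g hsb Finset.subset_union_right
      rw [hIRμf g] at this
      exact hT₁ne this.symm
    obtain ⟨y, hyT₁, hynμ⟩ := hex
    have hyD1 : y ∈ M.D1 μ g := ⟨M.Cf g (T ∪ μ.fm g), ⟨hC2, hT₁ne⟩, hyT₁, hynμ⟩
    have hyT : y ∈ T := by
      rcases Finset.mem_union.1 (Cf_subset g _ hyT₁) with h1 | h1
      · exact h1
      · exact absurd h1 hynμ
    exact hav y hyT (Set.mem_union_left _ (Set.mem_union_left _ hyD1))
  have CfEq : ∀ (g : F) (S : Finset W), μ.fm g ⊆ S →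
      (∀ x ∈ S, x ∉ M.Dall μ μW g) → M.Cf g S = μ.fm g := by
    intro g S hμS hav
    refine bestIn_eq (M.injF g) _ hμS (acc_or_empty_f (hIRμf g)) ?_
    rintro T' hT'S (hacc | rfl)
    · exact maxD g T' hacc (fun x hx => hav x (hT'S hx))
    · rcases acc_or_empty_f (hIRμf g) with hacc | hemp
      · exact le_of_lt hacc
      · rw [hemp]
  have maxE : ∀ (x : W) (T : Finset F), (M.uW x ∅ < M.uW x T) →
      (∀ y ∈ T, y ∉ M.Eall μ μW x) → M.uW x T ≤ M.uW x (μW.wm x) := by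
    intro x T hacc hav
    have hT1le : M.uW x T ≤ M.uW x (M.Cw x (T ∪ μW.wm x)) :=
      Cw_le x Finset.subset_union_left (Or.inl hacc)
    suffices h : M.Cw x (T ∪ μW.wm x) = μW.wm x by rwa [h] at hT1le
    by_contra hT₁ne
    have hC2 : M.Cw x (M.Cw x (T ∪ μW.wm x) ∪ μW.wm x) = M.Cw x (T ∪ μW.wm x) := by
      refine Cw_eq_of_subset x Finset.subset_union_left
        (Finset.union_subset (Cw_subset x _) Finset.subset_union_right)
    have hex : ∃ y ∈ M.Cw x (T ∪ μW.wm x), y ∉ μW.wm x := by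
      by_contra hcon
      push_neg at hcon
      have hsb : M.Cw x (T ∪ μW.wm x) ⊆ μW.wm x := hcon
      have := Cw_eq_of_subset x hsb Finset.subset_union_right
      rw [hIRμWw x] at this
      exact hT₁ne this.symm
    obtain ⟨y, hyT₁, hynμ⟩ := hex
    have hyE1 : y ∈ M.E1 μW x := ⟨M.Cw x (T ∪ μW.wm x), ⟨hC2, hT₁ne⟩, hyT₁, hynμ⟩
    have hyT : y ∈ T := by
      rcases Finset.mem_union.1 (Cw_subset x _ hyT₁) with h1 | h1
      · exact h1
      · exact absurd h1 hynμ
    exact hav y hyT (Set.mem_union_left _ (Set.mem_union_left _ hyE1))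
  have CwEq : ∀ (x : W) (S : Finset F), μW.wm x ⊆ S →
      (∀ y ∈ S, y ∉ M.Eall μ μW x) → M.Cw x S = μW.wm x := by
    intro x S hμS hav
    refine bestIn_eq (M.injW x) _ hμS (acc_or_empty_w (hIRμWw x)) ?_
    rintro T' hT'S (hacc | rfl)
    · exact maxE x T' hacc (fun y hy => hav y (hT'S hy))
    · rcases acc_or_empty_w (hIRμWw x) with hacc | hemp
      · exact le_of_lt hacc
      · rw [hemp]
  have CfredEq : ∀ (g : F) (S : Finset W), μ.fm g ⊆ S → M.Cfred μ μW g S = μ.fm g := by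
    intro g S hS
    rw [Cfred_filter]
    exact CfEq g _ (fun x hx => Finset.mem_filter.2 ⟨hS hx, Davμ hx⟩)
      (fun x hx => (Finset.mem_filter.1 hx).2)
  -- the sets of non-deleted workers
  have hSDav : ∀ (g : F), ∀ x ∈ Finset.univ.filter (fun y => y ∉ M.Dall μ μW g),
      x ∉ M.Dall μ μW g := fun g x hx => (Finset.mem_filter.1 hx).2
  have hCfSD : ∀ g : F, M.Cf g (Finset.univ.filter (fun y => y ∉ M.Dall μ μW g)) = μ.fm g :=
    fun g => CfEq g _ (fun x hx => Finset.mem_filter.2 ⟨Finset.mem_univ x, Davμ hx⟩) (hSDav g)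
  -- the one-step lemma
  have step : ∀ s : W × F, s.1 ∈ μ.fm s.2 → s.1 ∉ μW.fm s.2 → s.1 ∉ μ'.fm s.2 →
      ∃ p : W × F, (p.1 ∈ μ.fm p.2 ∧ p.1 ∉ μW.fm p.2 ∧ p.1 ∉ μ'.fm p.2) ∧
        p.1 ∉ μ.fm s.2 ∧ p.1 ∉ M.Dall μ μW s.2 ∧
        M.Cfred μ μW s.2 (Finset.univ \ {s.1}) = insert p.1 (μ.fm s.2 \ {s.1}) ∧
        M.Cwred μ μW p.1 (μ.wm p.1 ∪ {s.2}) = insert s.2 (μ.wm p.1 \ {p.2}) := by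
    rintro ⟨w₀, f₀⟩ hw₀μ hw₀μW hw₀μ'
    simp only at hw₀μ hw₀μW hw₀μ' ⊢
    set SD : Finset W := Finset.univ.filter (fun y => y ∉ M.Dall μ μW f₀) with hSDdef
    have hfil : (Finset.univ \ {w₀}).filter (fun x => x ∉ M.Dall μ μW f₀) = SD \ {w₀} := by
      ext z
      simp only [hSDdef, Finset.mem_filter, Finset.mem_sdiff, Finset.mem_univ, true_and,
        Finset.mem_singleton]
      tauto
    have hS1 : M.Cfred μ μW f₀ (Finset.univ \ {w₀}) = M.Cf f₀ (SD \ {w₀}) := by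
      rw [Cfred_filter, hfil]
    have hsubS' : μ.fm f₀ \ {w₀} ⊆ M.Cf f₀ (SD \ {w₀}) := by
      intro x hx
      obtain ⟨hxμ, hxw⟩ := Finset.mem_sdiff.1 hx
      refine subst_mem (hsub.1 f₀) (show x ∈ M.Cf f₀ SD from by rw [hCfSD f₀]; exact hxμ)
        Finset.sdiff_subset ?_
      exact Finset.mem_sdiff.2 ⟨Finset.mem_filter.2 ⟨Finset.mem_univ x, Davμ hxμ⟩, hxw⟩
    have hcardup : (M.Cf f₀ (SD \ {w₀})).card ≤ (μ.fm f₀).card := by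
      have := hlad.1 f₀ (SD \ {w₀}) SD Finset.sdiff_subset
      rwa [hCfSD f₀] at this
    have hμWsub : μW.fm f₀ ⊆ SD \ {w₀} := by
      intro x hx
      refine Finset.mem_sdiff.2 ⟨Finset.mem_filter.2 ⟨Finset.mem_univ x, DavμW hx⟩, ?_⟩
      simp only [Finset.mem_singleton]
      rintro rfl
      exact hw₀μW hx
    have hcarddown : (μ.fm f₀).card ≤ (M.Cf f₀ (SD \ {w₀})).card := by
      have := hlad.1 f₀ (μW.fm f₀) (SD \ {w₀}) hμWsub
      rw [hIRμWf f₀] at this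
      rw [← cardFμ f₀]
      exact this
    have hcard : (M.Cf f₀ (SD \ {w₀})).card = (μ.fm f₀).card :=
      le_antisymm hcardup hcarddown
    have hlt : (μ.fm f₀ \ {w₀}).card < (M.Cf f₀ (SD \ {w₀})).card := by
      rw [Finset.card_sdiff_of_subset (Finset.singleton_subset_iff.2 hw₀μ), Finset.card_singleton, hcard]
      have hpos : 0 < (μ.fm f₀).card := Finset.card_pos.2 ⟨w₀, hw₀μ⟩
      omega
    have hex : ∃ w₁ ∈ M.Cf f₀ (SD \ {w₀}), w₁ ∉ μ.fm f₀ \ {w₀} := by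
      by_contra hcon
      push_neg at hcon
      exact absurd (Finset.card_le_card hcon) (not_le.2 hlt)
    obtain ⟨w₁, hw₁S', hw₁n⟩ := hex
    have hw₁SD : w₁ ∈ SD \ {w₀} := Cf_subset f₀ _ hw₁S'
    have hw₁w₀ : w₁ ≠ w₀ := by
      have := (Finset.mem_sdiff.1 hw₁SD).2
      simpa using this
    have hw₁μ : w₁ ∉ μ.fm f₀ := fun h =>
      hw₁n (Finset.mem_sdiff.2 ⟨h, by simpa using hw₁w₀⟩)
    have hw₁D : w₁ ∉ M.Dall μ μW f₀ := (Finset.mem_filter.1 (Finset.mem_sdiff.1 hw₁SD).1).2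
    have hS'eq : M.Cf f₀ (SD \ {w₀}) = insert w₁ (μ.fm f₀ \ {w₀}) := by
      refine (Finset.eq_of_subset_of_card_le ?_ ?_).symm
      · intro z hz
        rcases Finset.mem_insert.1 hz with rfl | hzs
        · exact hw₁S'
        · exact hsubS' hzs
      · rw [Finset.card_insert_of_notMem (fun h => hw₁n h),
          Finset.card_sdiff_of_subset (Finset.singleton_subset_iff.2 hw₀μ), Finset.card_singleton, hcard]
        have hpos : 0 < (μ.fm f₀).card := Finset.card_pos.2 ⟨w₀, hw₀μ⟩
        omega
    -- worker-side data for w₁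
    have hD3un : (M.uW w₁ ∅ < M.uW w₁ {f₀}) ∧ f₀ ∉ M.E1 μW w₁ ∧ f₀ ∉ M.E2 μ w₁ := by
      have h3 : w₁ ∉ M.D3 μ μW f₀ := fun h => hw₁D (Set.mem_union_right _ h)
      simp only [Market.D3, Set.mem_setOf_eq, Set.mem_union, not_or, not_not] at h3
      exact ⟨h3.1, h3.2.1, h3.2.2⟩
    have hf₀acc : M.uF f₀ ∅ < M.uF f₀ {w₁} := Cf_acc_of_mem (hsub.1 f₀) hw₁S'
    have hf₀E : f₀ ∉ M.Eall μ μW w₁ := by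
      rintro ((h1 | h2) | h3)
      · exact hD3un.2.1 h1
      · exact hD3un.2.2 h2
      · rcases h3 with hn | hD12
        · exact hn hf₀acc
        · exact hw₁D (Set.mem_union_left _ hD12)
    have hf₀nμw : f₀ ∉ μ.wm w₁ := fun h => hw₁μ ((μ.consistent f₀ w₁).2 h)
    have hins : μ.wm w₁ ∪ {f₀} = insert f₀ (μ.wm w₁) := by
      rw [Finset.union_comm, ← Finset.insert_eq]
    have hCwred1 : M.Cwred μ μW w₁ (μ.wm w₁ ∪ {f₀}) = M.Cw w₁ (insert f₀ (μ.wm w₁)) := by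
      rw [Cwred_of_avoid, hins]
      intro y hy
      rcases Finset.mem_union.1 hy with h | h
      · exact Eavμ h
      · rw [Finset.mem_singleton] at h
        exact h ▸ hf₀E
    have hT'ne : M.Cw w₁ (insert f₀ (μ.wm w₁)) ≠ μ.wm w₁ := by
      intro heq
      refine hD3un.2.2 ⟨insert f₀ (μ.wm w₁), ⟨?_, ?_⟩, Finset.mem_insert_self _ _, hf₀nμw⟩
      · rw [show μ.wm w₁ ∪ insert f₀ (μ.wm w₁) = insert f₀ (μ.wm w₁) from
          Finset.union_eq_right.2 (Finset.subset_insert _ _)]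
        exact heq
      · intro hc
        have := Finset.mem_insert_self f₀ (μ.wm w₁)
        rw [← hc] at this
        exact hf₀nμw this
    have hf₀T' : f₀ ∈ M.Cw w₁ (insert f₀ (μ.wm w₁)) := by
      by_contra hnf
      have hTsub : M.Cw w₁ (insert f₀ (μ.wm w₁)) ⊆ μ.wm w₁ := by
        intro z hz
        rcases Finset.mem_insert.1 (Cw_subset w₁ _ hz) with rfl | h
        · exact absurd hz hnf
        · exact h
      have := Cw_eq_of_subset w₁ hTsub (Finset.subset_insert _ _)
      rw [hIRμw w₁] at this
      exact hT'ne this.symm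
    have hbigav : ∀ y ∈ insert f₀ (μ.wm w₁) ∪ μW.wm w₁, y ∉ M.Eall μ μW w₁ := by
      intro y hy
      rcases Finset.mem_union.1 hy with h | h
      · rcases Finset.mem_insert.1 h with rfl | h2
        · exact hf₀E
        · exact Eavμ h2
      · exact EavμW h
    have hCwbig : M.Cw w₁ (insert f₀ (μ.wm w₁) ∪ μW.wm w₁) = μW.wm w₁ :=
      CwEq w₁ _ Finset.subset_union_right hbigav
    have hcT'up : (M.Cw w₁ (insert f₀ (μ.wm w₁))).card ≤ (μ.wm w₁).card := by
      have := hlad.2 w₁ (insert f₀ (μ.wm w₁)) (insert f₀ (μ.wm w₁) ∪ μW.wm w₁)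
        Finset.subset_union_left
      rw [hCwbig] at this
      rw [cardWμ w₁]
      exact this
    have hcT'down : (μ.wm w₁).card ≤ (M.Cw w₁ (insert f₀ (μ.wm w₁))).card := by
      have := hlad.2 w₁ (μ.wm w₁) (insert f₀ (μ.wm w₁)) (Finset.subset_insert _ _)
      rwa [hIRμw w₁] at this
    have hcT' : (M.Cw w₁ (insert f₀ (μ.wm w₁))).card = (μ.wm w₁).card :=
      le_antisymm hcT'up hcT'down
    have hdiffcard : (μ.wm w₁ \ M.Cw w₁ (insert f₀ (μ.wm w₁))).card = 1 := by
      have h1 : (M.Cw w₁ (insert f₀ (μ.wm w₁))).erase f₀ ⊆ μ.wm w₁ := by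
        intro z hz
        obtain ⟨hzf, hzT⟩ := Finset.mem_erase.1 hz
        rcases Finset.mem_insert.1 (Cw_subset w₁ _ hzT) with rfl | h
        · exact absurd rfl hzf
        · exact h
      have h2 : ((M.Cw w₁ (insert f₀ (μ.wm w₁))).erase f₀).card = (μ.wm w₁).card - 1 := by
        rw [Finset.card_erase_of_mem hf₀T', hcT']
      have h3 : μ.wm w₁ \ M.Cw w₁ (insert f₀ (μ.wm w₁)) =
          μ.wm w₁ \ (M.Cw w₁ (insert f₀ (μ.wm w₁))).erase f₀ := by
        ext z
        simp only [Finset.mem_sdiff, Finset.mem_erase]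
        constructor
        · rintro ⟨h, hn⟩
          exact ⟨h, fun hc => hn hc.2⟩
        · rintro ⟨h, hn⟩
          refine ⟨h, fun hz => hn ⟨fun he => hf₀nμw (he ▸ h), hz⟩⟩
      have hpos : 0 < (μ.wm w₁).card := by
        rw [← hcT']
        exact Finset.card_pos.2 ⟨f₀, hf₀T'⟩
      rw [h3, Finset.card_sdiff_of_subset h1, h2]
      omega
    obtain ⟨f₁, hf₁eq⟩ := Finset.card_eq_one.1 hdiffcard
    have hf₁mem : f₁ ∈ μ.wm w₁ \ M.Cw w₁ (insert f₀ (μ.wm w₁)) := by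
      rw [hf₁eq]
      exact Finset.mem_singleton_self f₁
    have hf₁μ : f₁ ∈ μ.wm w₁ := (Finset.mem_sdiff.1 hf₁mem).1
    have hf₁T' : f₁ ∉ M.Cw w₁ (insert f₀ (μ.wm w₁)) := (Finset.mem_sdiff.1 hf₁mem).2
    have hf₁f₀ : f₁ ≠ f₀ := fun h => hf₀nμw (h ▸ hf₁μ)
    have hT'insert : M.Cw w₁ (insert f₀ (μ.wm w₁)) = insert f₀ (μ.wm w₁ \ {f₁}) := by
      ext z
      constructor
      · intro hz
        rcases Finset.mem_insert.1 (Cw_subset w₁ _ hz) with rfl | hzμ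
        · exact Finset.mem_insert_self _ _
        · refine Finset.mem_insert.2 (Or.inr (Finset.mem_sdiff.2 ⟨hzμ, ?_⟩))
          simp only [Finset.mem_singleton]
          rintro rfl
          exact hf₁T' hz
      · intro hz
        rcases Finset.mem_insert.1 hz with rfl | hzs
        · exact hf₀T'
        · obtain ⟨hzμ, hzf₁⟩ := Finset.mem_sdiff.1 hzs
          by_contra hzT
          have hzin : z ∈ μ.wm w₁ \ M.Cw w₁ (insert f₀ (μ.wm w₁)) :=
            Finset.mem_sdiff.2 ⟨hzμ, hzT⟩
          rw [hf₁eq] at hzin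
          exact hzf₁ hzin
    have hins2 : insert f₁ (M.Cw w₁ (insert f₀ (μ.wm w₁))) = insert f₀ (μ.wm w₁) := by
      rw [hT'insert]
      ext z
      simp only [Finset.mem_insert, Finset.mem_sdiff, Finset.mem_singleton]
      constructor
      · rintro (rfl | rfl | ⟨h, _⟩)
        · exact Or.inr hf₁μ
        · exact Or.inl rfl
        · exact Or.inr h
      · rintro (rfl | h)
        · exact Or.inr (Or.inl rfl)
        · by_cases hz : z = f₁
          · exact Or.inl hz
          · exact Or.inr (Or.inr ⟨h, hz⟩)
    have hT'big : M.Cw w₁ (insert f₀ (μ.wm w₁)) ⊆ insert f₀ (μ.wm w₁) := Cw_subset w₁ _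
    have hf₁μW : f₁ ∉ μW.wm w₁ := by
      intro hmem
      have h1 : f₁ ∈ M.Cw w₁ (insert f₀ (μ.wm w₁) ∪ μW.wm w₁) := by
        rw [hCwbig]
        exact hmem
      have h2 : f₁ ∈ M.Cw w₁ (insert f₁ (M.Cw w₁ (insert f₀ (μ.wm w₁)))) :=
        hsub.2 w₁ _ _ f₁ (hT'big.trans Finset.subset_union_left) h1
      rw [hins2] at h2
      exact hf₁T' h2
    have hf₁μ' : f₁ ∉ μ'.wm w₁ := by
      intro hmem
      by_cases hf₀μ' : f₀ ∈ μ'.wm w₁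
      · have h1 : f₁ ∈ M.Cw w₁ (μ'.wm w₁ ∪ μ.wm w₁) := by
          rw [hgeWμ'μ w₁]
          exact hmem
        have hTsub : M.Cw w₁ (insert f₀ (μ.wm w₁)) ⊆ μ'.wm w₁ ∪ μ.wm w₁ := by
          intro z hz
          rcases Finset.mem_insert.1 (hT'big hz) with rfl | h
          · exact Finset.mem_union_left _ hf₀μ'
          · exact Finset.mem_union_right _ h
        have h2 : f₁ ∈ M.Cw w₁ (insert f₁ (M.Cw w₁ (insert f₀ (μ.wm w₁)))) :=
          hsub.2 w₁ _ _ f₁ hTsub h1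
        rw [hins2] at h2
        exact hf₁T' h2
      · have hf₀Y : f₀ ∉ M.Cw w₁ (μ'.wm w₁ ∪ μ.wm w₁ ∪ {f₀}) := by
          intro hf₀Y
          have hws : f₀ ∈ M.Cw w₁ (insert f₀ (μ'.wm w₁)) :=
            hsub.2 w₁ _ (μ'.wm w₁) f₀
              (Finset.subset_union_left.trans Finset.subset_union_left) hf₀Y
          have hfs : w₁ ∈ M.Cf f₀ (insert w₁ (μ'.fm f₀)) := by
            refine hsub.1 f₀ (SD \ {w₀}) (μ'.fm f₀) w₁ ?_ hw₁S'
            intro z hz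
            refine Finset.mem_sdiff.2 ⟨Finset.mem_filter.2 ⟨Finset.mem_univ z, Davμ' hz⟩, ?_⟩
            simp only [Finset.mem_singleton]
            rintro rfl
            exact hw₀μ' hz
          have hw₁nμ' : w₁ ∉ μ'.fm f₀ := fun h => hf₀μ' ((μ'.consistent f₀ w₁).1 h)
          exact hμ'.2 f₀ w₁ ⟨hw₁nμ', hfs, hws⟩
        have hYsub : M.Cw w₁ (μ'.wm w₁ ∪ μ.wm w₁ ∪ {f₀}) ⊆ μ'.wm w₁ ∪ μ.wm w₁ := by
          intro z hz
          rcases Finset.mem_union.1 (Cw_subset w₁ _ hz) with h | h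
          · exact h
          · rw [Finset.mem_singleton] at h
            subst h
            exact absurd hz hf₀Y
        have hYeq : M.Cw w₁ (μ'.wm w₁ ∪ μ.wm w₁ ∪ {f₀}) = μ'.wm w₁ := by
          have := Cw_eq_of_subset w₁ hYsub Finset.subset_union_left
          rw [hgeWμ'μ w₁] at this
          exact this.symm
        have h1 : f₁ ∈ M.Cw w₁ (μ'.wm w₁ ∪ μ.wm w₁ ∪ {f₀}) := by
          rw [hYeq]
          exact hmem
        have hTsub : M.Cw w₁ (insert f₀ (μ.wm w₁)) ⊆ μ'.wm w₁ ∪ μ.wm w₁ ∪ {f₀} := by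
          intro z hz
          rcases Finset.mem_insert.1 (hT'big hz) with rfl | h
          · exact Finset.mem_union_right _ (Finset.mem_singleton_self z)
          · exact Finset.mem_union_left _ (Finset.mem_union_right _ h)
        have h2 : f₁ ∈ M.Cw w₁ (insert f₁ (M.Cw w₁ (insert f₀ (μ.wm w₁)))) :=
          hsub.2 w₁ _ _ f₁ hTsub h1
        rw [hins2] at h2
        exact hf₁T' h2
    refine ⟨(w₁, f₁), ⟨(μ.consistent f₁ w₁).2 hf₁μ,
      fun h => hf₁μW ((μW.consistent f₁ w₁).1 h),
      fun h => hf₁μ' ((μ'.consistent f₁ w₁).1 h)⟩, hw₁μ, hw₁D, ?_, ?_⟩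
    · rw [hS1, hS'eq]
    · rw [hCwred1, hT'insert]
  -- initial state
  have hexg : ∃ g, μ.fm g ≠ μ'.fm g := by
    by_contra hcon
    push_neg at hcon
    apply hnemm
    refine Matching.ext' μ μ' hcon ?_
    intro x
    ext g
    rw [← μ.consistent g x, ← μ'.consistent g x, hcon g]
  obtain ⟨g₀, hg₀⟩ := hexg
  have hcardg₀ : (μ.fm g₀).card = (μ'.fm g₀).card := by rw [← cardFμ g₀, cardFμ' g₀]
  have hexw : ∃ x ∈ μ.fm g₀, x ∉ μ'.fm g₀ := by
    by_contra hcon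
    push_neg at hcon
    exact hg₀ (Finset.eq_of_subset_of_card_le hcon (le_of_eq hcardg₀.symm))
  obtain ⟨w₀, hw₀μ, hw₀μ'⟩ := hexw
  have hw₀μW : w₀ ∉ μW.fm g₀ := by
    intro hmem
    have hf1 : w₀ ∈ M.Cf g₀ (insert w₀ (μ'.fm g₀)) :=
      hsub.1 g₀ (μ.fm g₀ ∪ μ'.fm g₀) (μ'.fm g₀) w₀ Finset.subset_union_right
        (by rw [hgeFμμ' g₀]; exact hw₀μ)
    have hw1 : g₀ ∈ M.Cw w₀ (insert g₀ (μ'.wm w₀)) :=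
      hsub.2 w₀ (μW.wm w₀ ∪ μ'.wm w₀) (μ'.wm w₀) g₀ Finset.subset_union_right
        (by rw [hgeWμWμ' w₀]; exact (μW.consistent g₀ w₀).1 hmem)
    exact hμ'.2 g₀ w₀ ⟨hw₀μ', hf1, hw1⟩
  -- the orbit
  let Valid : W × F → Prop := fun s => s.1 ∈ μ.fm s.2 ∧ s.1 ∉ μW.fm s.2 ∧ s.1 ∉ μ'.fm s.2
  let nextS : W × F → W × F := fun s =>
    if h : Valid s then (step s h.1 h.2.1 h.2.2).choose else s
  let X : ℕ → W × F := fun n => nextS^[n] (w₀, g₀)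
  have hXsucc : ∀ n, X (n+1) = nextS (X n) := fun n =>
    Function.iterate_succ_apply' nextS n (w₀, g₀)
  have hXvalid : ∀ n, Valid (X n) := by
    intro n
    induction n with
    | zero => exact ⟨hw₀μ, hw₀μW, hw₀μ'⟩
    | succ k ih =>
      rw [hXsucc k]
      show Valid (nextS (X k))
      have : nextS (X k) = (step (X k) ih.1 ih.2.1 ih.2.2).choose := dif_pos ih
      rw [this]
      exact ((step (X k) ih.1 ih.2.1 ih.2.2).choose_spec).1
  have hXspec : ∀ n, (X (n+1)).1 ∉ μ.fm (X n).2 ∧ (X (n+1)).1 ∉ M.Dall μ μW (X n).2 ∧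
      M.Cfred μ μW (X n).2 (Finset.univ \ {(X n).1}) =
        insert ((X (n+1)).1) (μ.fm (X n).2 \ {(X n).1}) ∧
      M.Cwred μ μW ((X (n+1)).1) (μ.wm ((X (n+1)).1) ∪ {(X n).2}) =
        insert ((X n).2) (μ.wm ((X (n+1)).1) \ {(X (n+1)).2}) := by
    intro n
    have h := hXvalid n
    have heq : X (n+1) = (step (X n) h.1 h.2.1 h.2.2).choose := by
      rw [hXsucc n]
      exact dif_pos h
    have hspec := (step (X n) h.1 h.2.1 h.2.2).choose_spec
    rw [← heq] at hspec
    exact ⟨hspec.2.1, hspec.2.2.1, hspec.2.2.2.1, hspec.2.2.2.2⟩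
  -- pigeonhole
  have hcollide : ∃ a b : ℕ, a < b ∧ X a = X b := by
    set T : Finset (W × F) :=
      Finset.univ ×ˢ (Finset.univ.biUnion fun x : W => μ.wm x) with hTdef
    have hmemT : ∀ n, X n ∈ T := by
      intro n
      refine Finset.mem_product.2 ⟨Finset.mem_univ _, ?_⟩
      have h1 : (X n).2 ∈ μ.wm (X n).1 := (μ.consistent _ _).1 (hXvalid n).1
      exact (Finset.subset_biUnion_of_mem (fun x : W => μ.wm x) (Finset.mem_univ (X n).1)) h1
    obtain ⟨a, b, hne, heq⟩ := Finite.exists_ne_map_eq_of_infinite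
      (fun n : ℕ => (⟨X n, hmemT n⟩ : {p // p ∈ T}))
    have heq' : X a = X b := congrArg Subtype.val heq
    rcases lt_or_gt_of_ne hne with h | h
    · exact ⟨a, b, h, heq'⟩
    · exact ⟨b, a, h, heq'.symm⟩
  obtain ⟨a, b, hab, hXab⟩ := hcollide
  have hPex : ∃ d, 0 < d ∧ ∃ m, X (m + d) = X m := by
    refine ⟨b - a, by omega, a, ?_⟩
    rw [show a + (b - a) = b from by omega]
    exact hXab.symm
  obtain ⟨hrpos, m, hper0⟩ := Nat.find_spec hPex
  set r := Nat.find hPex with hrdef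
  have hmin : ∀ d, d < r → ¬(0 < d ∧ ∃ m', X (m' + d) = X m') := fun d hd =>
    Nat.find_min hPex hd
  have hper : ∀ t, X (m + t + r) = X (m + t) := by
    intro t
    induction t with
    | zero => exact hper0
    | succ k ih =>
      have he : m + (k+1) + r = (m + k + r) + 1 := by omega
      rw [he, hXsucc, ih, ← hXsucc]
      rfl
  have hdist : ∀ j k, j < r → k < r → X (m + j) = X (m + k) → j = k := by
    intro j k hj hk heq
    by_contra hne
    wlog hjk : j < k generalizing j k
    · exact this k j hk hj heq.symm (Ne.symm hne) (by omega)
    refine hmin (k - j) (by omega) ⟨by omega, m + j, ?_⟩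
    rw [show m + j + (k - j) = m + k from by omega]
    exact heq.symm
  -- the cycle functions
  let w : ℕ → W := fun i => (X (m + i % r)).1
  let f : ℕ → F := fun i => (X (m + i % r)).2
  have hsuccY : ∀ i, X (m + (i+1) % r) = X ((m + i % r) + 1) := by
    intro i
    have hmod : (i % r + 1) % r = (i+1) % r := Nat.ModEq.add_right 1 (Nat.mod_modEq i r)
    have hlt : i % r < r := Nat.mod_lt i hrpos
    rcases Nat.lt_or_ge (i % r + 1) r with h | h
    · rw [← hmod, Nat.mod_eq_of_lt h]
      rfl
    · have hre : i % r + 1 = r := by omega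
      have h0 : (i+1) % r = 0 := by
        rw [← hmod, hre, Nat.mod_self]
      rw [h0]
      have := hper 0
      simp only [Nat.add_zero] at this
      rw [show (m + i % r) + 1 = m + r from by omega, Nat.add_zero]
      exact this.symm
  have hcycle : M.IsCycle μ μW r w f := by
    refine ⟨hrpos, fun i => ?_, fun i => ?_, fun i => ?_⟩
    · show (X (m + (i+r) % r)).1 = (X (m + i % r)).1
      rw [Nat.add_mod_right]
    · show (X (m + (i+r) % r)).2 = (X (m + i % r)).2
      rw [Nat.add_mod_right]
    · have hv := hXvalid (m + i % r)
      have hs := hXspec (m + i % r)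
      refine ⟨⟨hv.1, hv.2.1⟩, ?_, ?_⟩
      · have h2 := hs.2.2.1
        rw [← hsuccY i] at h2
        exact h2
      · have h3 := hs.2.2.2
        rw [← hsuccY i] at h3
        exact h3
  -- translation of the step data to cycle indices
  have hfilg : ∀ (g : F) (y : W), (Finset.univ \ {y}).filter (fun x => x ∉ M.Dall μ μW g) =
      (Finset.univ.filter (fun x => x ∉ M.Dall μ μW g)) \ {y} := by
    intro g y
    ext z
    simp only [Finset.mem_filter, Finset.mem_sdiff, Finset.mem_univ, true_and,
      Finset.mem_singleton]
    tauto
  have hwnext : ∀ i, w (i+1) = (X (m + i % r + 1)).1 := fun i => congrArg Prod.fst (hsuccY i)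
  have hfnext : ∀ i, f (i+1) = (X (m + i % r + 1)).2 := fun i => congrArg Prod.snd (hsuccY i)
  -- the per-firm analysis
  have hmain : ∀ g : F, (∃ i ∈ Finset.range r, f i = g) →
      M.Cf g (μ.fm g ∪ Market.cyclicFm μ r w f g) = μ.fm g ∧
      M.Cf g (Market.cyclicFm μ r w f g ∪ μ'.fm g) = Market.cyclicFm μ r w f g := by
    intro g hvis
    have hcyc : Market.cyclicFm μ r w f g =
        (μ.fm g \ ((Finset.range r).filter (fun i => f i = g)).image w) ∪
          ((Finset.range r).filter (fun i => f i = g)).image (fun i => w (i + 1)) := by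
      rw [Market.cyclicFm, if_pos hvis]
    set J := (Finset.range r).filter (fun i => f i = g) with hJdef
    set A := J.image w with hAdef
    set B := J.image (fun i => w (i + 1)) with hBdef
    set SDg := Finset.univ.filter (fun x => x ∉ M.Dall μ μW g) with hSDgdef
    have hJlt : ∀ i ∈ J, i < r := fun i hi => Finset.mem_range.1 (Finset.mem_filter.1 hi).1
    have hJf : ∀ i ∈ J, f i = g := fun i hi => (Finset.mem_filter.1 hi).2
    have hwval : ∀ i ∈ J, w i ∈ μ.fm g ∧ w i ∉ μW.fm g ∧ w i ∉ μ'.fm g := by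
      intro i hi
      have hv := hXvalid (m + i % r)
      have h1 : w i ∈ μ.fm (f i) := hv.1
      have h2 : w i ∉ μW.fm (f i) := hv.2.1
      have h3 : w i ∉ μ'.fm (f i) := hv.2.2
      rw [hJf i hi] at h1 h2 h3
      exact ⟨h1, h2, h3⟩
    have hBμ : ∀ i ∈ J, w (i+1) ∉ μ.fm g := by
      intro i hi
      have h1 := (hXspec (m + i % r)).1
      rw [← hwnext i] at h1
      have h2 : f i = g := hJf i hi
      rw [show (X (m + i % r)).2 = f i from rfl, h2] at h1
      exact h1
    have hBD : ∀ i ∈ J, w (i+1) ∉ M.Dall μ μW g := by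
      intro i hi
      have h1 := (hXspec (m + i % r)).2.1
      rw [← hwnext i] at h1
      rw [show (X (m + i % r)).2 = f i from rfl, hJf i hi] at h1
      exact h1
    have hii : ∀ i ∈ J, M.Cf g (SDg \ {w i}) = insert (w (i+1)) (μ.fm g \ {w i}) := by
      intro i hi
      have h1 := (hXspec (m + i % r)).2.2.1
      rw [← hwnext i] at h1
      rw [show (X (m + i % r)).2 = f i from rfl, hJf i hi,
        show (X (m + i % r)).1 = w i from rfl] at h1
      rw [Cfred_filter, hfilg g (w i)] at h1
      exact h1
    have hiii : ∀ i ∈ J, M.Cwred μ μW (w (i+1)) (μ.wm (w (i+1)) ∪ {g}) =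
        insert g (μ.wm (w (i+1)) \ {f (i+1)}) := by
      intro i hi
      have h1 := (hXspec (m + i % r)).2.2.2
      rw [← hwnext i, ← hfnext i] at h1
      rw [show (X (m + i % r)).2 = f i from rfl, hJf i hi] at h1
      exact h1
    have hwinj : ∀ i ∈ J, ∀ j ∈ J, w i = w j → i = j := by
      intro i hi j hj hww
      have hXij : X (m + i % r) = X (m + j % r) :=
        Prod.ext hww ((hJf i hi).trans (hJf j hj).symm)
      rw [Nat.mod_eq_of_lt (hJlt i hi), Nat.mod_eq_of_lt (hJlt j hj)] at hXij
      exact hdist i j (hJlt i hi) (hJlt j hj) hXij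
    have hninj : ∀ i ∈ J, ∀ j ∈ J, w (i+1) = w (j+1) → i = j := by
      intro i hi j hj hww
      have hiii_i := hiii i hi
      have hiii_j := hiii j hj
      rw [← hww] at hiii_j
      have heqs : insert g (μ.wm (w (i+1)) \ {f (i+1)}) =
          insert g (μ.wm (w (i+1)) \ {f (j+1)}) := hiii_i.symm.trans hiii_j
      have hQi : f (i+1) ∈ μ.wm (w (i+1)) := by
        have hv := hXvalid (m + (i+1) % r)
        exact (μ.consistent _ _).1 hv.1
      have hQj : f (j+1) ∈ μ.wm (w (i+1)) := by
        have hv := hXvalid (m + (j+1) % r)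
        have : f (j+1) ∈ μ.wm (w (j+1)) := (μ.consistent _ _).1 hv.1
        rwa [← hww] at this
      have hgQ : g ∉ μ.wm (w (i+1)) := fun hc => (hBμ i hi) ((μ.consistent g _).2 hc)
      have hff : f (i+1) = f (j+1) := by
        by_contra hne
        have h1 : f (i+1) ∈ insert g (μ.wm (w (i+1)) \ {f (j+1)}) :=
          Finset.mem_insert.2 (Or.inr (Finset.mem_sdiff.2 ⟨hQi, by simpa using hne⟩))
        rw [← heqs] at h1
        rcases Finset.mem_insert.1 h1 with he | hmem2
        · exact hgQ (he ▸ hQi)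
        · exact (Finset.mem_sdiff.1 hmem2).2 (Finset.mem_singleton_self _)
      have hXeq : X (m + (i+1) % r) = X (m + (j+1) % r) := Prod.ext hww hff
      have hmm : (i+1) % r = (j+1) % r :=
        hdist _ _ (Nat.mod_lt _ hrpos) (Nat.mod_lt _ hrpos) hXeq
      have hi' := hJlt i hi
      have hj' := hJlt j hj
      rcases Nat.lt_or_ge (i+1) r with h1 | h1 <;> rcases Nat.lt_or_ge (j+1) r with h2 | h2
      · rw [Nat.mod_eq_of_lt h1, Nat.mod_eq_of_lt h2] at hmm; omega
      · have hje : j + 1 = r := by omega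
        rw [Nat.mod_eq_of_lt h1, hje, Nat.mod_self] at hmm; omega
      · have hie : i + 1 = r := by omega
        rw [hie, Nat.mod_self, Nat.mod_eq_of_lt h2] at hmm; omega
      · omega
    -- elementwise facts about A and B
    have hAsub : A ⊆ μ.fm g := by
      intro x hx
      obtain ⟨i, hi, rfl⟩ := Finset.mem_image.1 hx
      exact (hwval i hi).1
    have hAμW : ∀ x ∈ A, x ∉ μW.fm g := by
      intro x hx
      obtain ⟨i, hi, rfl⟩ := Finset.mem_image.1 hx
      exact (hwval i hi).2.1
    have hAμ' : ∀ x ∈ A, x ∉ μ'.fm g := by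
      intro x hx
      obtain ⟨i, hi, rfl⟩ := Finset.mem_image.1 hx
      exact (hwval i hi).2.2
    have hBμset : ∀ x ∈ B, x ∉ μ.fm g := by
      intro x hx
      obtain ⟨i, hi, rfl⟩ := Finset.mem_image.1 hx
      exact hBμ i hi
    have hBDset : ∀ x ∈ B, x ∉ M.Dall μ μW g := by
      intro x hx
      obtain ⟨i, hi, rfl⟩ := Finset.mem_image.1 hx
      exact hBD i hi
    have hBA : ∀ x ∈ B, x ∉ A := fun x hx hxa => hBμset x hx (hAsub hxa)
    have hAcard : A.card = J.card :=
      Finset.card_image_of_injOn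
        (fun i hi j hj hww => hwinj i (Finset.mem_coe.1 hi) j (Finset.mem_coe.1 hj) hww)
    have hBcard : B.card = J.card :=
      Finset.card_image_of_injOn
        (fun i hi j hj hww => hninj i (Finset.mem_coe.1 hi) j (Finset.mem_coe.1 hj) hww)
    have hSDsub : μ.fm g ⊆ SDg :=
      fun x hx => Finset.mem_filter.2 ⟨Finset.mem_univ x, Davμ hx⟩
    -- Claim 1 : the choice from SDg \ A
    have hsub1 : μ.fm g \ A ⊆ M.Cf g (SDg \ A) := by
      intro z hz
      obtain ⟨hzμ, hzA⟩ := Finset.mem_sdiff.1 hz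
      refine subst_mem (hsub.1 g) (show z ∈ M.Cf g SDg from by rw [hCfSD g]; exact hzμ)
        Finset.sdiff_subset (Finset.mem_sdiff.2 ⟨hSDsub hzμ, hzA⟩)
    have hsub2 : B ⊆ M.Cf g (SDg \ A) := by
      intro z hz
      obtain ⟨i, hi, rfl⟩ := Finset.mem_image.1 hz
      have h1 : w (i+1) ∈ M.Cf g (SDg \ {w i}) := by
        rw [hii i hi]
        exact Finset.mem_insert_self _ _
      refine subst_mem (hsub.1 g) h1 ?_ ?_
      · intro y hy
        obtain ⟨hy1, hy2⟩ := Finset.mem_sdiff.1 hy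
        refine Finset.mem_sdiff.2 ⟨hy1, ?_⟩
        simp only [Finset.mem_singleton]
        rintro rfl
        exact hy2 (Finset.mem_image_of_mem w hi)
      · refine Finset.mem_sdiff.2 ⟨?_, hBA _ hz⟩
        exact Finset.mem_filter.2 ⟨Finset.mem_univ _, hBD i hi⟩
    have hνsub : (μ.fm g \ A) ∪ B ⊆ M.Cf g (SDg \ A) := Finset.union_subset hsub1 hsub2
    have hcup : (M.Cf g (SDg \ A)).card ≤ (μ.fm g).card := by
      have := hlad.1 g (SDg \ A) SDg Finset.sdiff_subset
      rwa [hCfSD g] at this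
    have hμWsub2 : μW.fm g ⊆ SDg \ A := by
      intro x hx
      refine Finset.mem_sdiff.2 ⟨Finset.mem_filter.2 ⟨Finset.mem_univ x, DavμW hx⟩, ?_⟩
      intro hxA
      exact hAμW x hxA hx
    have hcdown : (μ.fm g).card ≤ (M.Cf g (SDg \ A)).card := by
      have := hlad.1 g (μW.fm g) (SDg \ A) hμWsub2
      rw [hIRμWf g] at this
      rw [← cardFμ g]
      exact this
    have hdisj : Disjoint (μ.fm g \ A) B := by
      rw [Finset.disjoint_left]
      intro z hz hzB
      exact hBμset z hzB (Finset.mem_sdiff.1 hz).1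
    have hcardν : ((μ.fm g \ A) ∪ B).card = (μ.fm g).card := by
      rw [Finset.card_union_of_disjoint hdisj, Finset.card_sdiff_of_subset hAsub, hAcard, hBcard]
      have := Finset.card_le_card hAsub
      rw [hAcard] at this
      omega
    have hClaim : M.Cf g (SDg \ A) = (μ.fm g \ A) ∪ B := by
      refine (Finset.eq_of_subset_of_card_le hνsub ?_).symm
      rw [hcardν]
      exact hcup
    constructor
    · rw [hcyc]
      have hU : μ.fm g ∪ ((μ.fm g \ A) ∪ B) = μ.fm g ∪ B := by
        ext z
        simp only [Finset.mem_union, Finset.mem_sdiff]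
        tauto
      rw [hU]
      have h1 : M.Cf g SDg ⊆ μ.fm g ∪ B := by
        rw [hCfSD g]
        exact Finset.subset_union_left
      have h2 : μ.fm g ∪ B ⊆ SDg := by
        refine Finset.union_subset hSDsub ?_
        intro z hz
        exact Finset.mem_filter.2 ⟨Finset.mem_univ z, hBDset z hz⟩
      have := Cf_eq_of_subset g h1 h2
      rw [hCfSD g] at this
      exact this
    · rw [hcyc]
      have h1 : M.Cf g (SDg \ A) ⊆ ((μ.fm g \ A) ∪ B) ∪ μ'.fm g := by
        rw [hClaim]
        exact Finset.subset_union_left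
      have h2 : ((μ.fm g \ A) ∪ B) ∪ μ'.fm g ⊆ SDg \ A := by
        refine Finset.union_subset (Finset.union_subset ?_ ?_) ?_
        · intro z hz
          obtain ⟨hz1, hz2⟩ := Finset.mem_sdiff.1 hz
          exact Finset.mem_sdiff.2 ⟨hSDsub hz1, hz2⟩
        · intro z hz
          refine Finset.mem_sdiff.2 ⟨Finset.mem_filter.2 ⟨Finset.mem_univ z, hBDset z hz⟩,
            hBA z hz⟩
        · intro z hz
          refine Finset.mem_sdiff.2 ⟨Finset.mem_filter.2 ⟨Finset.mem_univ z, Davμ' hz⟩, ?_⟩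
          intro hzA
          exact hAμ' z hzA hz
      have := Cf_eq_of_subset g h1 h2
      rw [hClaim] at this
      exact this
  -- assemble the cyclic matching
  refine ⟨⟨fun g => Market.cyclicFm μ r w f g,
    fun x => ((Finset.univ.biUnion (fun y : W => μ.wm y)) ∪ (Finset.range r).image f).filter
      (fun g => x ∈ Market.cyclicFm μ r w f g), ?_⟩,
    ⟨r, w, f, hcycle, fun g => rfl⟩, ?_, ?_⟩
  · intro g x
    simp only [Finset.mem_filter]
    constructor
    · intro hx
      refine ⟨?_, hx⟩
      by_cases hvis : ∃ i ∈ Finset.range r, f i = g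
      · refine Finset.mem_union_right _ ?_
        obtain ⟨i, hir, rfl⟩ := hvis
        exact Finset.mem_image_of_mem f hir
      · have hng : Market.cyclicFm μ r w f g = μ.fm g := by
          rw [Market.cyclicFm, if_neg hvis]
        rw [hng] at hx
        exact Finset.mem_union_left _
          (Finset.mem_biUnion.2 ⟨x, Finset.mem_univ x, (μ.consistent g x).1 hx⟩)
    · exact fun h => h.2
  · intro g
    show M.Cf g (μ.fm g ∪ Market.cyclicFm μ r w f g) = μ.fm g
    by_cases hvis : ∃ i ∈ Finset.range r, f i = g
    · exact (hmain g hvis).1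
    · rw [Market.cyclicFm, if_neg hvis, Finset.union_self]
      exact hIRμf g
  · intro g
    show M.Cf g (Market.cyclicFm μ r w f g ∪ μ'.fm g) = Market.cyclicFm μ r w f g
    by_cases hvis : ∃ i ∈ Finset.range r, f i = g
    · exact (hmain g hvis).2
    · rw [Market.cyclicFm, if_neg hvis]
      exact hgeFμμ' g
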